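/- arXiv:1510.04093 — 6 statements merged into one kernel-verified Lean document; each statement's English description precedes it below -/
import Mathlib

section
/- Let A = {|a_1⟩,…,|a_d⟩} and B = {|b_1⟩,…,|b_d⟩} be orthonormal bases of ℂ^d (the eigenbases of two non-degenerate observables) and let α > 0, α ≠ 1. Then the infimum over all density matrices ρ of T_α(p_ρ^A) + T_α(q_ρ^{A→B}) equals min_{1≤i≤d} (1/(1−α))(Σ_{j=1}^d |⟨a_i|b_j⟩|^{2α} − 1), and the infimum is attained at ρ = |a_i⟩⟨a_i| for a minimizing index i. -/
open Matrix
open scoped BigOperators ComplexOrder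

/-- The inner product ⟨x|y⟩ on ℂ^d. -/
noncomputable def qinner {d : ℕ} (x y : Fin d → ℂ) : ℂ := star x ⬝ᵥ y

/-- `a` is an orthonormal basis of ℂ^d (d orthonormal vectors). -/
def IsONB {d : ℕ} (a : Fin d → (Fin d → ℂ)) : Prop :=
  ∀ i j, qinner (a i) (a j) = if i = j then 1 else 0

/-- Measurement distribution p_ρ^B(j) = ⟨b_j|ρ|b_j⟩. -/
noncomputable def probB {d : ℕ} (ρ : Matrix (Fin d) (Fin d) ℂ)
    (b : Fin d → (Fin d → ℂ)) (j : Fin d) : ℝ :=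
  (qinner (b j) (ρ *ᵥ b j)).re

/-- Distribution of a B-measurement after a non-selective A-measurement:
q_ρ^{A→B}(j) = Σ_i ⟨a_i|ρ|a_i⟩ |⟨a_i|b_j⟩|². -/
noncomputable def probAB {d : ℕ} (ρ : Matrix (Fin d) (Fin d) ℂ)
    (a b : Fin d → (Fin d → ℂ)) (j : Fin d) : ℝ :=
  ∑ i, probB ρ a i * ‖qinner (a i) (b j)‖ ^ 2

/-- Tsallis entropy of order α. -/
noncomputable def tsallis {d : ℕ} (α : ℝ) (p : Fin d → ℝ) : ℝ :=
  (1 / (1 - α)) * ((∑ j, p j ^ α) - 1)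

/-- Rank-one projector |v⟩⟨v|. -/
noncomputable def proj {d : ℕ} (v : Fin d → ℂ) : Matrix (Fin d) (Fin d) ℂ :=
  vecMulVec v (star v)

/-! The A→B distribution is the mixture `∑ i, p i • c i` of the rows
`c i = (|⟨a_i|b_j⟩|²)_j`, weighted by `p = p_ρ^A`. For `α ≥ 0` the map `x ↦ x^α / (1 - α)` is
concave on `[0, ∞)` whichever side of `1` the exponent lies, so `T_α` is concave on nonnegative
vectors and `T_α(q) ≥ ∑ p_i T_α(c_i) ≥ min_i T_α(c_i)`, while `T_α(p) ≥ 0`. The eigenstate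
`|a_i⟩⟨a_i|` has `p = δ_i` and `q = c_i`, so it attains the bound. -/

open Set

lemma ConcaveOn.sum_comp_apply {ι : Type*} [Fintype ι] {s : Set ℝ} {g : ℝ → ℝ}
    (hg : ConcaveOn ℝ s g) :
    ConcaveOn ℝ (univ.pi fun _ : ι => s) fun p => ∑ i, g (p i) := by
  refine ⟨convex_pi fun i _ => hg.1, fun x hx y hy a b ha hb hab => ?_⟩
  simp only [smul_eq_mul, Finset.mul_sum, ← Finset.sum_add_distrib, Pi.add_apply, Pi.smul_apply]
  exact Finset.sum_le_sum fun i _ =>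
    hg.2 (hx i (mem_univ i)) (hy i (mem_univ i)) ha hb hab

lemma concaveOn_inv_one_sub_mul_rpow {α : ℝ} (hα : 0 ≤ α) :
    ConcaveOn ℝ (Ici 0) fun x : ℝ => (1 - α)⁻¹ * x ^ α := by
  rcases le_total α 1 with h | h
  · exact (Real.concaveOn_rpow hα h).smul (inv_nonneg.2 (sub_nonneg.2 h))
  · refine ((convexOn_rpow h).smul (c := -(1 - α)⁻¹) ?_).neg.congr fun x _ => ?_
    · simpa using sub_nonpos.2 h
    · simp [smul_eq_mul]

section Tsallis

variable {d : ℕ} {α : ℝ}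

lemma tsallis_eq_sum_sub (p : Fin d → ℝ) :
    tsallis α p = ∑ j, (1 - α)⁻¹ * p j ^ α + -(1 - α)⁻¹ := by
  rw [tsallis, ← Finset.mul_sum]
  ring

lemma concaveOn_tsallis (hα : 0 ≤ α) : ConcaveOn ℝ (Ici 0) (tsallis (d := d) α) := by
  rw [← pi_univ_Ici]
  exact ((concaveOn_inv_one_sub_mul_rpow hα).sum_comp_apply.add_const _).congr
    fun p _ => (tsallis_eq_sum_sub p).symm

lemma tsallis_nonneg {p : Fin d → ℝ} (hp : p ∈ stdSimplex ℝ (Fin d)) : 0 ≤ tsallis α p := by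
  have hp01 := mem_Icc_of_mem_stdSimplex hp
  rcases le_total α 1 with h | h
  · have : ∑ j, p j ≤ ∑ j, p j ^ α := Finset.sum_le_sum fun j _ =>
      Real.self_le_rpow_of_le_one (hp01 j).1 (hp01 j).2 h
    exact mul_nonneg (by simpa using h) (by linarith [hp.2])
  · have : ∑ j, p j ^ α ≤ ∑ j, p j := Finset.sum_le_sum fun j _ =>
      Real.rpow_le_self_of_le_one (hp01 j).1 (hp01 j).2 h
    exact mul_nonneg_of_nonpos_of_nonpos (by simpa using h) (by linarith [hp.2])

lemma tsallis_single (hα : α ≠ 0) (i : Fin d) : tsallis α (Pi.single i 1) = 0 := by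
  have : ∀ j, (Pi.single i 1 : Fin d → ℝ) j ^ α = (Pi.single i 1 : Fin d → ℝ) j := fun j => by
    rcases eq_or_ne j i with rfl | hj
    · simp
    · simp [hj, Real.zero_rpow hα]
  simp [tsallis, this]

lemma tsallis_le_tsallis_sum_smul_of_forall_le (hα : 0 ≤ α) {n : ℕ} {p : Fin n → ℝ}
    (hp : p ∈ stdSimplex ℝ (Fin n)) {c : Fin n → Fin d → ℝ} (hc : ∀ i, 0 ≤ c i) {i₀ : Fin n}
    (hi₀ : ∀ i, tsallis α (c i₀) ≤ tsallis α (c i)) :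
    tsallis α (c i₀) ≤ tsallis α (∑ i, p i • c i) :=
  calc tsallis α (c i₀) = ∑ i, p i • tsallis α (c i₀) := by rw [← Finset.sum_smul, hp.2, one_smul]
    _ ≤ ∑ i, p i • tsallis α (c i) :=
      Finset.sum_le_sum fun i _ => smul_le_smul_of_nonneg_left (hi₀ i) (hp.1 i)
    _ ≤ tsallis α (∑ i, p i • c i) :=
      (concaveOn_tsallis hα).le_map_sum (fun i _ => hp.1 i) hp.2 fun i _ => hc i

lemma tsallis_sq {x : Fin d → ℝ} (hx : ∀ j, 0 ≤ x j) :
    tsallis α (fun j => x j ^ 2) = 1 / (1 - α) * (∑ j, x j ^ (2 * α) - 1) := by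
  simp only [tsallis, Real.rpow_mul (hx _), Real.rpow_two]

end Tsallis

section Measurement

variable {d : ℕ} {a b : Fin d → Fin d → ℂ}

lemma IsONB.sum_qinner_mulVec (ha : IsONB a) (ρ : Matrix (Fin d) (Fin d) ℂ) :
    ∑ i, qinner (a i) (ρ *ᵥ a i) = ρ.trace := by
  set M : Matrix (Fin d) (Fin d) ℂ := (of a)ᵀ
  have hM : M * Mᴴ = 1 := mul_eq_one_comm.mp <| by
    ext i j
    simpa [M, qinner, mul_apply, dotProduct, one_apply] using ha i j
  calc ∑ i, qinner (a i) (ρ *ᵥ a i) = (Mᴴ * ρ * M).trace := by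
        simp [M, trace, qinner, mul_apply, dotProduct, mulVec, Finset.mul_sum, mul_assoc]
    _ = (ρ * (M * Mᴴ)).trace := by rw [Matrix.mul_assoc, trace_mul_comm, Matrix.mul_assoc]
    _ = ρ.trace := by rw [hM, Matrix.mul_one]

lemma probB_nonneg {ρ : Matrix (Fin d) (Fin d) ℂ} (hρ : ρ.PosSemidef) (j : Fin d) :
    0 ≤ probB ρ b j :=
  (Complex.le_def.mp (hρ.dotProduct_mulVec_nonneg (b j))).1

lemma probB_mem_stdSimplex (ha : IsONB a) {ρ : Matrix (Fin d) (Fin d) ℂ} (hρ : ρ.PosSemidef)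
    (hρ1 : ρ.trace = 1) : probB ρ a ∈ stdSimplex ℝ (Fin d) :=
  ⟨probB_nonneg hρ, by simp [probB, ← Complex.re_sum, ha.sum_qinner_mulVec, hρ1]⟩

lemma probAB_eq_sum_smul (ρ : Matrix (Fin d) (Fin d) ℂ) :
    probAB ρ a b = ∑ i, probB ρ a i • fun j => ‖qinner (a i) (b j)‖ ^ 2 := by
  ext j
  simp [probAB]

lemma qinner_proj_mulVec (v x y : Fin d → ℂ) :
    qinner x (proj v *ᵥ y) = qinner x v * qinner v y := by
  simp [qinner, proj, vecMulVec_mulVec, mul_comm]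

lemma probB_proj (ha : IsONB a) (i : Fin d) : probB (proj (a i)) a = Pi.single i 1 := by
  ext k
  rw [probB, qinner_proj_mulVec, ha, ha, Pi.single_apply]
  by_cases hk : k = i <;> simp [hk]

lemma IsONB.trace_proj (ha : IsONB a) (i : Fin d) : (proj (a i)).trace = 1 := by
  simpa [proj, trace_vecMulVec, dotProduct_comm, qinner] using ha i i

end Measurement

theorem tsallis_succ_EUR_general {d : ℕ} (hd : 0 < d) (a b : Fin d → (Fin d → ℂ))
    (ha : IsONB a) (α : ℝ) (hα : 0 < α) :
    IsLeast {x : ℝ | ∃ ρ : Matrix (Fin d) (Fin d) ℂ, ρ.PosSemidef ∧ ρ.trace = 1 ∧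
        x = tsallis α (probB ρ a) + tsallis α (probAB ρ a b)}
      (⨅ i : Fin d, (1 / (1 - α)) * ((∑ j, ‖qinner (a i) (b j)‖ ^ (2 * α)) - 1)) ∧
    ∃ i : Fin d,
      (∀ k : Fin d, (1 / (1 - α)) * ((∑ j, ‖qinner (a i) (b j)‖ ^ (2 * α)) - 1)
          ≤ (1 / (1 - α)) * ((∑ j, ‖qinner (a k) (b j)‖ ^ (2 * α)) - 1)) ∧
      tsallis α (probB (proj (a i)) a) + tsallis α (probAB (proj (a i)) a b)
        = ⨅ k : Fin d, (1 / (1 - α)) * ((∑ j, ‖qinner (a k) (b j)‖ ^ (2 * α)) - 1) := by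
  have : Nonempty (Fin d) := Fin.pos_iff_nonempty.mp hd
  let c : Fin d → Fin d → ℝ := fun i j => ‖qinner (a i) (b j)‖ ^ 2
  have hc : ∀ i, 1 / (1 - α) * (∑ j, ‖qinner (a i) (b j)‖ ^ (2 * α) - 1) = tsallis α (c i) :=
    fun i => (tsallis_sq fun _ => norm_nonneg _).symm
  simp only [hc]
  obtain ⟨i₀, hi₀⟩ := exists_eq_ciInf_of_finite (f := fun i => tsallis α (c i))
  have hmin : ∀ k, tsallis α (c i₀) ≤ tsallis α (c k) :=
    fun k => hi₀ ▸ ciInf_le (Finite.bddBelow_range _) k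
  have hval : tsallis α (probB (proj (a i₀)) a) + tsallis α (probAB (proj (a i₀)) a b)
      = tsallis α (c i₀) := by
    rw [probAB_eq_sum_smul, probB_proj ha, tsallis_single hα.ne', zero_add]
    simp [c, Pi.single_apply]
  refine ⟨⟨⟨proj (a i₀), posSemidef_vecMulVec_self_star _, ha.trace_proj i₀, ?_⟩, ?_⟩,
    i₀, hmin, hval.trans hi₀⟩
  · rw [hval, hi₀]
  rintro x ⟨ρ, hρ, hρ1, rfl⟩
  have hp := probB_mem_stdSimplex ha hρ hρ1
  rw [← hi₀, probAB_eq_sum_smul]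
  exact (tsallis_le_tsallis_sum_smul_of_forall_le (c := c) hα.le hp
    (fun i j => sq_nonneg _) hmin).trans (le_add_of_nonneg_left (tsallis_nonneg hp))

theorem tsallis_succ_EUR {d : ℕ} (hd : 0 < d) (a b : Fin d → (Fin d → ℂ))
    (ha : IsONB a) (hb : IsONB b) (α : ℝ) (hα : 0 < α) (hα1 : α ≠ 1) :
    IsLeast {x : ℝ | ∃ ρ : Matrix (Fin d) (Fin d) ℂ, ρ.PosSemidef ∧ ρ.trace = 1 ∧
        x = tsallis α (probB ρ a) + tsallis α (probAB ρ a b)}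
      (⨅ i : Fin d, (1 / (1 - α)) * ((∑ j, ‖qinner (a i) (b j)‖ ^ (2 * α)) - 1)) ∧
    ∃ i : Fin d,
      (∀ k : Fin d, (1 / (1 - α)) * ((∑ j, ‖qinner (a i) (b j)‖ ^ (2 * α)) - 1)
          ≤ (1 / (1 - α)) * ((∑ j, ‖qinner (a k) (b j)‖ ^ (2 * α)) - 1)) ∧
      tsallis α (probB (proj (a i)) a) + tsallis α (probAB (proj (a i)) a b)
        = ⨅ k : Fin d, (1 / (1 - α)) * ((∑ j, ‖qinner (a k) (b j)‖ ^ (2 * α)) - 1) :=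
  tsallis_succ_EUR_general hd a b ha α hα
end

section
/- Let A^(1),…,A^(N) be N orthonormal bases {|a^(i)_j⟩}_{j=1}^d of ℂ^d. For every POVM {M_k} on ℂ^d and every family of density matrices {σ_k}, the average fidelity (1/(Nd)) Σ_k Σ_{i=1}^N Σ_{j=1}^d ⟨a^(i)_j|M_k|a^(i)_j⟩ ⟨a^(i)_j|σ_k|a^(i)_j⟩ is at most 1 − inf_{‖φ‖=1} (1/N) Σ_{i=1}^N T₂((|⟨φ|a^(i)_j⟩|²)_{j=1}^d). Equivalently, the incompatibility Q(A^(1),…,A^(N)) = 1 − F_S^max is bounded below by the Tsallis-T₂ entropic uncertainty bound t₂(A^(1),…,A^(N)) = inf_{‖φ‖=1} (1/N) Σ_i T₂((|⟨φ|a^(i)_j⟩|²)_j). -/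
open Matrix
open scoped BigOperators ComplexOrder

/-! Expand each positive semidefinite matrix spectrally, `⟨w|A|w⟩ = Σₗ λₗ |⟨uₗ|w⟩|²` with
`λₗ ≥ 0`, `Σₗ λₗ = tr A` and unit vectors `uₗ`. This bounds the contribution of outcome `k` by
`tr M_k · tr σ_k` times the largest overlap `Σ_{i,j} |⟨u|a_ij⟩|² |⟨v|a_ij⟩|²` over unit `u, v`.
Since `xy ≤ (x² + y²)/2`, an overlap is at most the larger of the collision sums
`Σ_{i,j} |⟨φ|a_ij⟩|⁴` (`φ = u, v`), and each collision sum is `N (1 - average T₂)`, hence at most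
`N (1 - t₂)`. Summing over `k` with `Σ_k tr M_k = tr 1 = d` gives the bound. -/

open WithLp
open scoped InnerProductSpace

lemma qinner_eq_inner {d : ℕ} (x y : Fin d → ℂ) : qinner x y = ⟪toLp 2 x, toLp 2 y⟫_ℂ :=
  dotProduct_comm _ _

lemma qinner_ofLp_ofLp {d : ℕ} (x y : EuclideanSpace ℂ (Fin d)) :
    qinner (ofLp x) (ofLp y) = ⟪x, y⟫_ℂ :=
  qinner_eq_inner _ _

lemma IsONB.orthonormal {d : ℕ} {b : Fin d → Fin d → ℂ} (hb : IsONB b) :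
    Orthonormal ℂ fun j => toLp 2 (b j) :=
  orthonormal_iff_ite.2 fun i j => by rw [← qinner_eq_inner, hb]

lemma IsONB.sum_norm_qinner_sq_le_one {d : ℕ} {b : Fin d → Fin d → ℂ} (hb : IsONB b)
    {φ : Fin d → ℂ} (hφ : qinner φ φ = 1) : ∑ j, ‖qinner φ (b j)‖ ^ 2 ≤ 1 := by
  have hφ' : ‖toLp 2 φ‖ = 1 := by
    rw [norm_eq_sqrt_re_inner (𝕜 := ℂ), ← qinner_eq_inner, hφ]
    simp
  simpa [qinner_eq_inner, norm_inner_symm (toLp 2 φ), hφ'] using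
    hb.orthonormal.sum_inner_products_le (toLp 2 φ) (s := Finset.univ)

lemma IsONB.sum_norm_qinner_pow_four_le_one {d : ℕ} {b : Fin d → Fin d → ℂ} (hb : IsONB b)
    {φ : Fin d → ℂ} (hφ : qinner φ φ = 1) : ∑ j, ‖qinner φ (b j)‖ ^ 4 ≤ 1 :=
  calc ∑ j, ‖qinner φ (b j)‖ ^ 4 = ∑ j, (‖qinner φ (b j)‖ ^ 2) ^ 2 := by simp_rw [← pow_mul]
    _ ≤ (∑ j, ‖qinner φ (b j)‖ ^ 2) ^ 2 :=
        Finset.sum_sq_le_sq_sum_of_nonneg fun _ _ => by positivity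
    _ ≤ 1 := pow_le_one₀ (by positivity) (hb.sum_norm_qinner_sq_le_one hφ)

lemma sum_mul_le_of_sum_sq_le {ι R : Type*} [Field R] [LinearOrder R] [IsStrictOrderedRing R]
    (s : Finset ι) (x y : ι → R) {K : R} (hx : ∑ i ∈ s, x i ^ 2 ≤ K) (hy : ∑ i ∈ s, y i ^ 2 ≤ K) :
    ∑ i ∈ s, x i * y i ≤ K := by
  have h : ∑ i ∈ s, 2 * (x i * y i) ≤ ∑ i ∈ s, (x i ^ 2 + y i ^ 2) :=
    Finset.sum_le_sum fun i _ => by linarith [two_mul_le_add_sq (x i) (y i)]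
  rw [← Finset.mul_sum, Finset.sum_add_distrib] at h
  linarith

lemma qinner_conj {d : ℕ} (x y : Fin d → ℂ) : qinner x y = starRingEnd ℂ (qinner y x) := by
  simp only [qinner_eq_inner, inner_conj_symm]

lemma qinner_eigenvectorBasis_mulVec {d : ℕ} {A : Matrix (Fin d) (Fin d) ℂ} (hA : A.IsHermitian)
    (l : Fin d) (w : Fin d → ℂ) :
    qinner (hA.eigenvectorBasis l) (A *ᵥ w) =
      hA.eigenvalues l * qinner (hA.eigenvectorBasis l) w := by
  have h : star ⇑(hA.eigenvectorBasis l) ᵥ* A = star (A *ᵥ hA.eigenvectorBasis l) := by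
    rw [star_mulVec, hA.eq]
  rw [qinner, dotProduct_mulVec, h, hA.mulVec_eigenvectorBasis]
  simp [qinner, star_smul]

lemma re_qinner_mulVec_self {d : ℕ} {A : Matrix (Fin d) (Fin d) ℂ} (hA : A.IsHermitian)
    (w : Fin d → ℂ) :
    (qinner w (A *ᵥ w)).re = ∑ l, hA.eigenvalues l * ‖qinner (hA.eigenvectorBasis l) w‖ ^ 2 := by
  have h := hA.eigenvectorBasis.sum_inner_mul_inner (toLp 2 w) (toLp 2 (A *ᵥ w))
  simp only [← qinner_ofLp_ofLp, qinner_eigenvectorBasis_mulVec hA] at h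
  rw [← h, Complex.re_sum]
  refine Finset.sum_congr rfl fun l _ => ?_
  rw [qinner_conj w, mul_left_comm, Complex.conj_mul']
  norm_cast

lemma Matrix.PosSemidef.sum_re_qinner_mulVec_mul_le {d : ℕ} {P : Type*} [Fintype P]
    {A : Matrix (Fin d) (Fin d) ℂ} (hA : A.PosSemidef) (w : P → Fin d → ℂ) (c : P → ℝ) {K : ℝ}
    (hK : ∀ u, qinner u u = 1 → ∑ p, ‖qinner u (w p)‖ ^ 2 * c p ≤ K) :
    ∑ p, (qinner (w p) (A *ᵥ w p)).re * c p ≤ A.trace.re * K := by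
  have hunit : ∀ l, qinner (hA.1.eigenvectorBasis l) (hA.1.eigenvectorBasis l) = 1 := by
    simp [qinner_ofLp_ofLp]
  calc ∑ p, (qinner (w p) (A *ᵥ w p)).re * c p
      = ∑ l, hA.1.eigenvalues l * ∑ p, ‖qinner (hA.1.eigenvectorBasis l) (w p)‖ ^ 2 * c p := by
        simp_rw [re_qinner_mulVec_self hA.1, Finset.sum_mul, Finset.mul_sum, mul_assoc]
        exact Finset.sum_comm
    _ ≤ ∑ l, hA.1.eigenvalues l * K :=
        Finset.sum_le_sum fun l _ =>
          mul_le_mul_of_nonneg_left (hK _ (hunit l)) (hA.eigenvalues_nonneg l)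
    _ = A.trace.re * K := by
        rw [← Finset.sum_mul, hA.1.trace_eq_sum_eigenvalues]
        simp

lemma sum_re_qinner_mulVec_mul_re_qinner_mulVec_le {d : ℕ} {P : Type*} [Fintype P]
    {A B : Matrix (Fin d) (Fin d) ℂ} (hA : A.PosSemidef) (hB : B.PosSemidef)
    (w : P → Fin d → ℂ) {K : ℝ}
    (hK : ∀ u v, qinner u u = 1 → qinner v v = 1 →
      ∑ p, ‖qinner u (w p)‖ ^ 2 * ‖qinner v (w p)‖ ^ 2 ≤ K) :
    ∑ p, (qinner (w p) (A *ᵥ w p)).re * (qinner (w p) (B *ᵥ w p)).re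
      ≤ A.trace.re * (B.trace.re * K) :=
  hA.sum_re_qinner_mulVec_mul_le w _ fun u hu => by
    simpa only [mul_comm] using
      hB.sum_re_qinner_mulVec_mul_le w (fun p => ‖qinner u (w p)‖ ^ 2) fun v hv => hK v u hv hu

theorem Q_ge_tsallisEUR {d N : ℕ} (hd : 0 < d) (hN : 0 < N)
    (a : Fin N → Fin d → (Fin d → ℂ)) (ha : ∀ i, IsONB (a i))
    (m : ℕ) (M σ : Fin m → Matrix (Fin d) (Fin d) ℂ)
    (hM : ∀ k, (M k).PosSemidef) (hMsum : ∑ k, M k = 1)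
    (hσ : ∀ k, (σ k).PosSemidef) (hσtr : ∀ k, (σ k).trace = 1) :
    (1 / ((N : ℝ) * d)) * ∑ k, ∑ i, ∑ j,
        (qinner (a i j) (M k *ᵥ a i j)).re * (qinner (a i j) (σ k *ᵥ a i j)).re
      ≤ 1 - sInf {x : ℝ | ∃ φ : Fin d → ℂ, qinner φ φ = 1 ∧
          x = (1 / (N : ℝ)) * ∑ i, (1 - ∑ j, ‖qinner φ (a i j)‖ ^ 4)} := by
  set S := {x : ℝ | ∃ φ : Fin d → ℂ, qinner φ φ = 1 ∧
    x = (1 / (N : ℝ)) * ∑ i, (1 - ∑ j, ‖qinner φ (a i j)‖ ^ 4)}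
  have hS : BddBelow S := ⟨0, by
    rintro _ ⟨φ, hφ, rfl⟩
    exact mul_nonneg (by positivity) (Finset.sum_nonneg fun i _ =>
      sub_nonneg.2 ((ha i).sum_norm_qinner_pow_four_le_one hφ))⟩
  have hcollision : ∀ φ, qinner φ φ = 1 →
      ∑ p : Fin N × Fin d, (‖qinner φ (a p.1 p.2)‖ ^ 2) ^ 2 ≤ N * (1 - sInf S) := by
    intro φ hφ
    have hc := csInf_le hS ⟨φ, hφ, rfl⟩
    simp only [Finset.sum_sub_distrib, Finset.sum_const, Finset.card_univ, Fintype.card_fin,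
      nsmul_eq_mul, mul_one] at hc
    simp only [Fintype.sum_prod_type, ← pow_mul, Nat.reduceMul]
    field_simp at hc
    linarith
  have hfidelity : ∀ k, ∑ i, ∑ j, (qinner (a i j) (M k *ᵥ a i j)).re *
      (qinner (a i j) (σ k *ᵥ a i j)).re ≤ (M k).trace.re * (N * (1 - sInf S)) := fun k => by
    simpa [← Fintype.sum_prod_type', hσtr k] using
      sum_re_qinner_mulVec_mul_re_qinner_mulVec_le (hM k) (hσ k) _
        fun u v hu hv => sum_mul_le_of_sum_sq_le _ _ _ (hcollision u hu) (hcollision v hv)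
  have htr : ∑ k, (M k).trace.re = d := by
    rw [← Complex.re_sum, ← trace_sum, hMsum, trace_one]
    simp
  calc (1 / ((N : ℝ) * d)) * ∑ k, ∑ i, ∑ j,
        (qinner (a i j) (M k *ᵥ a i j)).re * (qinner (a i j) (σ k *ᵥ a i j)).re
      ≤ (1 / ((N : ℝ) * d)) * ∑ k, (M k).trace.re * (N * (1 - sInf S)) := by
        gcongr with k
        exact hfidelity k
    _ = 1 - sInf S := by
        rw [← Finset.sum_mul, htr]
        field_simp
end

section
/- Let A = {|a_i⟩} and B = {|b_j⟩} be orthonormal bases of ℂ^d. Then Q_F(A,B) ≥ t₂^succ(A,B), where t₂^succ(A,B) = (1/4)[ min_{1≤i≤d} (1 − Σ_{j=1}^d |⟨a_i|b_j⟩|⁴) + min_{1≤j≤d} (1 − Σ_{i=1}^d |⟨a_i|b_j⟩|⁴) ] is the average Tsallis-T₂ entropic uncertainty bound for successive measurements. -/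
/-!
In the pure state `ρ = |b_j⟩⟨b_j|` the distribution `p_ρ^B` is the point mass at `j`, so the
fidelity collapses to `√(q_ρ^{A→B}(j))` and `1 − F² = 1 − ∑ᵢ |⟨a_i|b_j⟩|⁴`. Hence each term of the
second minimum is one of the values whose supremum is `Q_F(A→B)`, and symmetrically each term of
the first minimum is bounded by `Q_F(B→A)`.
-/

open Matrix
open scoped BigOperators ComplexOrder

/-- The set of values 1 − F(p_ρ^B, q_ρ^{A→B})² over density matrices ρ;
`Q_F(A→B)` is its supremum. -/
noncomputable def QFset {d : ℕ} (a b : Fin d → (Fin d → ℂ)) : Set ℝ :=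
  {x | ∃ ρ : Matrix (Fin d) (Fin d) ℂ, ρ.PosSemidef ∧ ρ.trace = 1 ∧
    x = 1 - (∑ j, Real.sqrt (probB ρ b j * probAB ρ a b j)) ^ 2}

section

variable {d : ℕ}

lemma qinner_eq_star_qinner (x y : Fin d → ℂ) : qinner x y = star (qinner y x) :=
  star_dotProduct x y

lemma norm_qinner_comm (x y : Fin d → ℂ) : ‖qinner x y‖ = ‖qinner y x‖ := by
  rw [qinner_eq_star_qinner, norm_star]

lemma qinner_vecMulVec_mulVec (x y z : Fin d → ℂ) :
    qinner z (vecMulVec x (star x) *ᵥ y) = qinner z x * qinner x y := by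
  simp only [qinner, vecMulVec_mulVec, dotProduct_smul, MulOpposite.smul_eq_mul_unop,
    MulOpposite.unop_op]

lemma probB_vecMulVec (x : Fin d → ℂ) (c : Fin d → (Fin d → ℂ)) (j : Fin d) :
    probB (vecMulVec x (star x)) c j = ‖qinner x (c j)‖ ^ 2 := by
  rw [probB, qinner_vecMulVec_mulVec, qinner_eq_star_qinner (c j), Complex.star_def,
    Complex.conj_mul', ← Complex.ofReal_pow, Complex.ofReal_re]

lemma probB_vecMulVec_of_isONB {b : Fin d → (Fin d → ℂ)} (hb : IsONB b) (j₀ j : Fin d) :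
    probB (vecMulVec (b j₀) (star (b j₀))) b j = if j₀ = j then 1 else 0 := by
  rw [probB_vecMulVec, hb]
  split_ifs <;> simp

lemma probAB_vecMulVec (x : Fin d → ℂ) (a b : Fin d → (Fin d → ℂ)) (j : Fin d) :
    probAB (vecMulVec x (star x)) a b j =
      ∑ i, ‖qinner (a i) x‖ ^ 2 * ‖qinner (a i) (b j)‖ ^ 2 := by
  simp only [probAB, probB_vecMulVec, norm_qinner_comm x]

lemma one_sub_sum_norm_pow_four_mem_QFset (a : Fin d → (Fin d → ℂ)) {b : Fin d → (Fin d → ℂ)}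
    (hb : IsONB b) (j₀ : Fin d) :
    1 - ∑ i, ‖qinner (a i) (b j₀)‖ ^ 4 ∈ QFset a b := by
  refine ⟨vecMulVec (b j₀) (star (b j₀)), posSemidef_vecMulVec_self_star _, ?_, ?_⟩
  · rw [trace_vecMulVec, dotProduct_comm]
    exact (hb j₀ j₀).trans (if_pos rfl)
  · have hfidelity : ∑ j, Real.sqrt (probB (vecMulVec (b j₀) (star (b j₀))) b j *
          probAB (vecMulVec (b j₀) (star (b j₀))) a b j) =
        Real.sqrt (∑ i, ‖qinner (a i) (b j₀)‖ ^ 4) := by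
      rw [Finset.sum_eq_single j₀ (fun j _ hj => by
          rw [probB_vecMulVec_of_isONB hb, if_neg hj.symm, zero_mul, Real.sqrt_zero]) (by simp),
        probB_vecMulVec_of_isONB hb, if_pos rfl, one_mul, probAB_vecMulVec]
      simp only [← pow_add]
    rw [hfidelity, Real.sq_sqrt (by positivity)]

lemma QFset_bddAbove (a b : Fin d → (Fin d → ℂ)) : BddAbove (QFset a b) := by
  refine ⟨1, ?_⟩
  rintro _ ⟨ρ, -, -, rfl⟩
  nlinarith [sq_nonneg (∑ j, Real.sqrt (probB ρ b j * probAB ρ a b j))]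

lemma one_sub_sum_norm_pow_four_le_sSup_QFset (a : Fin d → (Fin d → ℂ))
    {b : Fin d → (Fin d → ℂ)} (hb : IsONB b) (j : Fin d) :
    1 - ∑ i, ‖qinner (a i) (b j)‖ ^ 4 ≤ sSup (QFset a b) :=
  le_csSup (QFset_bddAbove a b) (one_sub_sum_norm_pow_four_mem_QFset a hb j)

end

theorem QF_ge_tsallis_succ_EUR {d : ℕ} (hd : 0 < d) (a b : Fin d → (Fin d → ℂ))
    (ha : IsONB a) (hb : IsONB b) :
    (1 / 4 : ℝ) * ((⨅ i : Fin d, (1 - ∑ j, ‖qinner (a i) (b j)‖ ^ 4))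
        + (⨅ j : Fin d, (1 - ∑ i, ‖qinner (a i) (b j)‖ ^ 4)))
      ≤ (1 / 4 : ℝ) * (sSup (QFset a b) + sSup (QFset b a)) := by
  obtain ⟨k⟩ : Nonempty (Fin d) := ⟨⟨0, hd⟩⟩
  have hBA : (⨅ i : Fin d, (1 - ∑ j, ‖qinner (a i) (b j)‖ ^ 4)) ≤ sSup (QFset b a) := by
    refine (ciInf_le (Finite.bddBelow_range _) k).trans ?_
    simpa only [norm_qinner_comm (b _) (a _)] using
      one_sub_sum_norm_pow_four_le_sSup_QFset b ha k
  have hAB : (⨅ j : Fin d, (1 - ∑ i, ‖qinner (a i) (b j)‖ ^ 4)) ≤ sSup (QFset a b) :=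
    (ciInf_le (Finite.bddBelow_range _) k).trans (one_sub_sum_norm_pow_four_le_sSup_QFset a hb k)
  linarith
end

section
/- Let a, b ∈ ℝ³ be unit vectors and let A, B be the qubit observables with eigenprojectors P^a_± = (I ± a·σ)/2 and P^b_± = (I ± b·σ)/2. Then sup over 2×2 density matrices ρ of [1 − (Σ_{j∈{+,−}} √( Tr[P^b_j ρ] · Σ_{i∈{+,−}} Tr[P^a_i ρ] Tr[P^a_i P^b_j] ) )²] = (1/2)(1 − (a·b)²), and the supremum is attained at ρ = P^b_+ (an eigenstate of B). Consequently Q_F(A→B) = Q_F(B→A) = (1/2)(1 − (a·b)²) and Q_F(A,B) = (1/4)(1 − (a·b)²). -/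
open Matrix
open scoped BigOperators ComplexOrder

/-- a·σ = a₁σ_x + a₂σ_y + a₃σ_z. -/
noncomputable def pauliDot (v : Fin 3 → ℝ) : Matrix (Fin 2) (Fin 2) ℂ :=
  (v 0 : ℂ) • !![0, 1; 1, 0] + (v 1 : ℂ) • !![0, -Complex.I; Complex.I, 0]
    + (v 2 : ℂ) • !![1, 0; 0, -1]

/-- Eigenprojectors P^a_± = (I ± a·σ)/2; `blochProj a true = P^a_+`. -/
noncomputable def blochProj (v : Fin 3 → ℝ) (s : Bool) : Matrix (Fin 2) (Fin 2) ℂ :=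
  (1 / 2 : ℂ) • (1 + (if s then 1 else -1 : ℂ) • pauliDot v)

/-- 1 − F(p_ρ^B, q_ρ^{A→B})² for a qubit state ρ and observables with Bloch vectors a, b. -/
noncomputable def qubitInfid (a b : Fin 3 → ℝ) (ρ : Matrix (Fin 2) (Fin 2) ℂ) : ℝ :=
  1 - (∑ j : Bool, Real.sqrt (((blochProj b j * ρ).trace).re *
      (∑ i : Bool, ((blochProj a i * ρ).trace).re
        * ((blochProj a i * blochProj b j).trace).re))) ^ 2

/-- The set of values 1 − F(p_ρ^B, q_ρ^{A→B})² over qubit density matrices ρ;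
`Q_F(A→B)` is its supremum. -/
noncomputable def qubitQFset (a b : Fin 3 → ℝ) : Set ℝ :=
  {x | ∃ ρ : Matrix (Fin 2) (Fin 2) ℂ, ρ.PosSemidef ∧ ρ.trace = 1 ∧ x = qubitInfid a b ρ}

/-!
Write a state as ρ = (1 + r·σ)/2 with |r| ≤ 1 (positivity of ρ is det ρ = (1 - |r|²)/4 ≥ 0).
Since Tr[P^v_s P^w_s'] = (1 + s s' v·w)/2 for signs s, s', the distributions p^B and q^{A→B}
have biases t = b·r and c u, where c = a·b and u = a·r, and
1 - F² = (1 - t c u - √((1 - t²)(1 - c²u²)))/2.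
The bound 1 - F² ≤ (1 - c²)/2 then follows from the Cauchy–Schwarz inequality
(u - c t)² ≤ (1 - c²)(1 - t²) for the components of a and r orthogonal to b,
and r = b attains it.
-/

lemma pauliDot_mul_pauliDot (a b : Fin 3 → ℝ) :
    pauliDot a * pauliDot b = ((a ⬝ᵥ b : ℝ) : ℂ) • 1 + Complex.I • pauliDot (a ⨯₃ b) := by
  ext i j
  fin_cases i <;> fin_cases j <;> apply Complex.ext <;>
    simp [pauliDot, cross_apply, dotProduct, Fin.sum_univ_three, Matrix.mul_apply] <;> ring

lemma trace_pauliDot (v : Fin 3 → ℝ) : (pauliDot v).trace = 0 := by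
  simp [pauliDot, Matrix.trace, Fin.sum_univ_two]

lemma trace_pauliDot_mul_pauliDot (a b : Fin 3 → ℝ) :
    (pauliDot a * pauliDot b).trace = 2 * (a ⬝ᵥ b : ℝ) := by
  simp [pauliDot_mul_pauliDot, trace_pauliDot, mul_comm]

lemma pauliDot_mul_self (v : Fin 3 → ℝ) : pauliDot v * pauliDot v = ((v ⬝ᵥ v : ℝ) : ℂ) • 1 := by
  rw [pauliDot_mul_pauliDot, cross_self]
  simp [pauliDot]

lemma isHermitian_blochProj (v : Fin 3 → ℝ) (s : Bool) : (blochProj v s).IsHermitian := by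
  ext i j
  fin_cases i <;> fin_cases j <;> cases s <;> simp [blochProj, pauliDot, Complex.ext_iff] <;> ring

lemma trace_blochProj (v : Fin 3 → ℝ) (s : Bool) : (blochProj v s).trace = 1 := by
  cases s <;> simp [blochProj, trace_pauliDot]

lemma re_trace_blochProj_mul_blochProj (v w : Fin 3 → ℝ) (s s' : Bool) :
    ((blochProj v s * blochProj w s').trace).re
      = (1 + (if s then 1 else -1) * (if s' then 1 else -1) * (v ⬝ᵥ w)) / 2 := by
  cases s <;> cases s' <;>
    simp [blochProj, mul_add, add_mul, trace_pauliDot, trace_pauliDot_mul_pauliDot] <;> ring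

lemma blochProj_mul_self {v : Fin 3 → ℝ} (hv : v ⬝ᵥ v = 1) (s : Bool) :
    blochProj v s * blochProj v s = blochProj v s := by
  cases s <;> simp [blochProj, mul_add, add_mul, pauliDot_mul_self, hv] <;> module

lemma posSemidef_blochProj {v : Fin 3 → ℝ} (hv : v ⬝ᵥ v = 1) (s : Bool) :
    (blochProj v s).PosSemidef := by
  rw [← blochProj_mul_self hv s]
  nth_rw 1 [← (isHermitian_blochProj v s).eq]
  exact posSemidef_conjTranspose_mul_self _

lemma det_blochProj (r : Fin 3 → ℝ) : (blochProj r true).det = ((1 - r ⬝ᵥ r) / 4 : ℝ) := by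
  apply Complex.ext <;>
    simp [det_fin_two, blochProj, pauliDot, dotProduct, Fin.sum_univ_three] <;> ring

noncomputable def blochVector (ρ : Matrix (Fin 2) (Fin 2) ℂ) : Fin 3 → ℝ :=
  ![2 * (ρ 0 1).re, -2 * (ρ 0 1).im, (ρ 0 0).re - (ρ 1 1).re]

lemma Matrix.IsHermitian.eq_blochProj {ρ : Matrix (Fin 2) (Fin 2) ℂ} (hρ : ρ.IsHermitian)
    (htr : ρ.trace = 1) : ρ = blochProj (blochVector ρ) true := by
  have h10 : ρ 1 0 = star (ρ 0 1) := (hρ.apply 1 0).symm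
  have h00 : (ρ 0 0).im = 0 := by rw [← hρ.coe_re_apply_self 0]; simp
  have h11 : (ρ 1 1).im = 0 := by rw [← hρ.coe_re_apply_self 1]; simp
  have htr' : (ρ 0 0).re + (ρ 1 1).re = 1 := by
    simpa [trace_fin_two] using congrArg Complex.re htr
  ext i j
  fin_cases i <;> fin_cases j <;>
    simp [blochProj, pauliDot, blochVector, Complex.ext_iff, h10, h00, h11] <;> linarith

lemma Matrix.PosSemidef.exists_eq_blochProj {ρ : Matrix (Fin 2) (Fin 2) ℂ} (hρ : ρ.PosSemidef)
    (htr : ρ.trace = 1) : ∃ r : Fin 3 → ℝ, r ⬝ᵥ r ≤ 1 ∧ ρ = blochProj r true := by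
  refine ⟨blochVector ρ, ?_, hρ.isHermitian.eq_blochProj htr⟩
  have hdet := hρ.det_nonneg
  rw [hρ.isHermitian.eq_blochProj htr, det_blochProj, Complex.zero_le_real] at hdet
  linarith

section DotProduct

variable {ι : Type*} [Fintype ι]

lemma dotProduct_sq_le (v w : ι → ℝ) : (v ⬝ᵥ w) ^ 2 ≤ (v ⬝ᵥ v) * (w ⬝ᵥ w) := by
  simpa only [dotProduct, sq] using Finset.sum_mul_sq_le_sq_mul_sq Finset.univ v w

lemma sq_dotProduct_le_one {v w : ι → ℝ} (hv : v ⬝ᵥ v ≤ 1) (hw : w ⬝ᵥ w ≤ 1) :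
    (v ⬝ᵥ w) ^ 2 ≤ 1 :=
  (dotProduct_sq_le v w).trans (mul_le_one₀ hv (by simpa using dotProduct_self_star_nonneg w) hw)

lemma sq_dotProduct_sub_le {a b r : ι → ℝ} (ha : a ⬝ᵥ a = 1) (hb : b ⬝ᵥ b = 1)
    (hr : r ⬝ᵥ r ≤ 1) :
    (a ⬝ᵥ r - (a ⬝ᵥ b) * (b ⬝ᵥ r)) ^ 2 ≤ (1 - (a ⬝ᵥ b) ^ 2) * (1 - (b ⬝ᵥ r) ^ 2) := by
  have hcs := dotProduct_sq_le (a - (a ⬝ᵥ b) • b) (r - (b ⬝ᵥ r) • b)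
  simp only [sub_dotProduct, dotProduct_sub, smul_dotProduct, dotProduct_smul, smul_eq_mul,
    ha, hb, dotProduct_comm b a, dotProduct_comm r b] at hcs
  nlinarith [sq_dotProduct_le_one ha.le hb.le]

end DotProduct

lemma sq_le_mul_add_sqrt {c t u : ℝ} (h : (u - c * t) ^ 2 ≤ (1 - c ^ 2) * (1 - t ^ 2)) :
    c ^ 2 ≤ t * (c * u) + √((1 - t ^ 2) * (1 - (c * u) ^ 2)) := by
  -- (1 - t²)(1 - c²u²) - (c² - tcu)² = c²((1 - c²)(1 - t²) - (u - ct)²) + (1 - c²)(1 - t²)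
  have hsq : (c ^ 2 - t * (c * u)) ^ 2 ≤ (1 - t ^ 2) * (1 - (c * u) ^ 2) := by
    nlinarith [mul_le_mul_of_nonneg_left h (sq_nonneg c), sq_nonneg (u - c * t)]
  linarith [le_abs_self (c ^ 2 - t * (c * u)), Real.abs_le_sqrt hsq]

/-- The fidelity of the distributions ((1 + x)/2, (1 - x)/2) and ((1 + y)/2, (1 - y)/2). -/
noncomputable def binaryFidelity (x y : ℝ) : ℝ :=
  √((1 + x) / 2 * ((1 + y) / 2)) + √((1 - x) / 2 * ((1 - y) / 2))

lemma binaryFidelity_sq {x y : ℝ} (hx : x ^ 2 ≤ 1) (hy : y ^ 2 ≤ 1) :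
    binaryFidelity x y ^ 2 = (1 + x * y + √((1 - x ^ 2) * (1 - y ^ 2))) / 2 := by
  obtain ⟨hx₁, hx₂⟩ := abs_le.1 ((sq_le_one_iff_abs_le_one x).1 hx)
  obtain ⟨hy₁, hy₂⟩ := abs_le.1 ((sq_le_one_iff_abs_le_one y).1 hy)
  have hp : 0 ≤ (1 + x) / 2 * ((1 + y) / 2) := by apply mul_nonneg <;> linarith
  have hm : 0 ≤ (1 - x) / 2 * ((1 - y) / 2) := by apply mul_nonneg <;> linarith
  have hcross : √((1 + x) / 2 * ((1 + y) / 2)) * √((1 - x) / 2 * ((1 - y) / 2))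
      = √((1 - x ^ 2) * (1 - y ^ 2)) / 4 := by
    rw [← Real.sqrt_mul hp, show (1 + x) / 2 * ((1 + y) / 2) * ((1 - x) / 2 * ((1 - y) / 2))
      = (1 - x ^ 2) * (1 - y ^ 2) / 4 ^ 2 by ring, Real.sqrt_div' _ (by positivity),
      Real.sqrt_sq (by positivity)]
  rw [binaryFidelity, add_sq, Real.sq_sqrt hp, Real.sq_sqrt hm, mul_assoc, hcross]
  ring

lemma qubitInfid_blochProj (a b r : Fin 3 → ℝ) :
    qubitInfid a b (blochProj r true)
      = 1 - binaryFidelity (b ⬝ᵥ r) ((a ⬝ᵥ b) * (a ⬝ᵥ r)) ^ 2 := by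
  simp only [qubitInfid, binaryFidelity, Fintype.sum_bool, re_trace_blochProj_mul_blochProj,
    if_true, Bool.false_eq_true, if_false]
  congr 4 <;> ring

lemma qubitInfid_blochProj_self (a : Fin 3 → ℝ) {b : Fin 3 → ℝ} (hb : b ⬝ᵥ b = 1) :
    qubitInfid a b (blochProj b true) = 1 / 2 * (1 - (a ⬝ᵥ b) ^ 2) := by
  rw [qubitInfid_blochProj, hb, binaryFidelity, sub_self, zero_div, zero_mul, Real.sqrt_zero,
    add_zero, Real.sq_sqrt (by nlinarith [mul_self_nonneg (a ⬝ᵥ b)])]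
  ring

lemma qubitInfid_blochProj_le {a b r : Fin 3 → ℝ} (ha : a ⬝ᵥ a = 1) (hb : b ⬝ᵥ b = 1)
    (hr : r ⬝ᵥ r ≤ 1) : qubitInfid a b (blochProj r true) ≤ 1 / 2 * (1 - (a ⬝ᵥ b) ^ 2) := by
  have hc := sq_dotProduct_le_one ha.le hb.le
  have ht := sq_dotProduct_le_one hb.le hr
  have hcu : ((a ⬝ᵥ b) * (a ⬝ᵥ r)) ^ 2 ≤ 1 := by
    rw [mul_pow]; exact mul_le_one₀ hc (sq_nonneg _) (sq_dotProduct_le_one ha.le hr)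
  rw [qubitInfid_blochProj, binaryFidelity_sq ht hcu]
  linarith [sq_le_mul_add_sqrt (sq_dotProduct_sub_le ha hb hr)]

lemma isGreatest_qubitQFset {a b : Fin 3 → ℝ} (ha : a ⬝ᵥ a = 1) (hb : b ⬝ᵥ b = 1) :
    IsGreatest (qubitQFset a b) (1 / 2 * (1 - (a ⬝ᵥ b) ^ 2)) := by
  refine ⟨⟨blochProj b true, posSemidef_blochProj hb true, trace_blochProj b true,
    (qubitInfid_blochProj_self a hb).symm⟩, ?_⟩
  rintro _ ⟨ρ, hρ, htr, rfl⟩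
  obtain ⟨r, hr, rfl⟩ := hρ.exists_eq_blochProj htr
  exact qubitInfid_blochProj_le ha hb hr

theorem qubit_QF (a b : Fin 3 → ℝ)
    (ha : ∑ i, a i ^ 2 = 1) (hb : ∑ i, b i ^ 2 = 1) :
    IsGreatest (qubitQFset a b) ((1 / 2) * (1 - (∑ i, a i * b i) ^ 2)) ∧
    qubitInfid a b (blochProj b true) = (1 / 2) * (1 - (∑ i, a i * b i) ^ 2) ∧
    IsGreatest (qubitQFset b a) ((1 / 2) * (1 - (∑ i, a i * b i) ^ 2)) ∧
    (1 / 4) * (sSup (qubitQFset a b) + sSup (qubitQFset b a))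
      = (1 / 4) * (1 - (∑ i, a i * b i) ^ 2) := by
  rw [show ∑ i, a i * b i = a ⬝ᵥ b from rfl]
  replace ha : a ⬝ᵥ a = 1 := by simpa only [dotProduct, sq] using ha
  replace hb : b ⬝ᵥ b = 1 := by simpa only [dotProduct, sq] using hb
  have hab := isGreatest_qubitQFset ha hb
  have hba := isGreatest_qubitQFset hb ha
  rw [dotProduct_comm] at hba
  refine ⟨hab, qubitInfid_blochProj_self a hb, hba, ?_⟩
  rw [hab.csSup_eq, hba.csSup_eq]
  ring
end

section
/- Let d₁, d₂, N₁, N₂ be positive integers and identify ℂ^{d₁+d₂} = ℂ^{d₁} ⊕ ℂ^{d₂}. Let S₁ be an ensemble of N₁d₁ unit vectors lying in the subspace ℂ^{d₁} ⊕ 0 and S₂ an ensemble of N₂d₂ unit vectors lying in the subspace 0 ⊕ ℂ^{d₂}. Then the maximum state-estimation fidelity of the combined ensemble S₁ ∪ S₂ of N₁d₁ + N₂d₂ equally likely states, taken over strategies on ℂ^{d₁+d₂}, satisfies F^max_{S₁⊕S₂} = (N₁d₁ F^max_{S₁} + N₂d₂ F^max_{S₂})/(N₁d₁ + N₂d₂),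 where F^max_{S₁} and F^max_{S₂} are the maximum fidelities of S₁ and S₂ over strategies on ℂ^{d₁} and ℂ^{d₂} respectively. -/
open Matrix
open scoped BigOperators ComplexOrder

/-- The set of average fidelities of all state-estimation strategies for the ensemble
of equally likely unit vectors `ψ s`; its supremum is the maximum fidelity F_S^max. -/
noncomputable def fidSet {n : ℕ} {S : Type} [Fintype S] (ψ : S → Fin n → ℂ) : Set ℝ :=
  {x | ∃ (m : ℕ) (M σ : Fin m → Matrix (Fin n) (Fin n) ℂ),
    (∀ k, (M k).PosSemidef) ∧ (∑ k, M k = 1) ∧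
    (∀ k, (σ k).PosSemidef ∧ (σ k).trace = 1) ∧
    x = (1 / (Fintype.card S : ℝ)) * ∑ k, ∑ s,
      (qinner (ψ s) (M k *ᵥ ψ s)).re * (qinner (ψ s) (σ k *ᵥ ψ s)).re}

/-!
Write `ℂ^{d₁+d₂} = V₁ ℂ^{d₁} ⊕ V₂ ℂ^{d₂}` with isometries `V₁`, `V₂` onto orthogonal complements.
A pair of strategies for the two ensembles is pushed forward along `V₁ ⊕ V₂` to a strategy for
the combined ensemble whose total (unnormalised) fidelity is the sum of the two. Conversely a
strategy for the combined ensemble is compressed by `Vᵢᴴ (·) Vᵢ` to each summand: the POVM stays a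
POVM, while each compressed density matrix has trace at most one and is padded up to a density
matrix, which can only increase the fidelity. Hence the average fidelities of the combined
ensemble and the weighted means `(|S₁| x₁ + |S₂| x₂) / (|S₁| + |S₂|)` of average fidelities of the
two ensembles dominate each other, so both sets have the same supremum.
-/

open scoped Pointwise in
lemma csSup_image2_weightedMean {A B : Set ℝ} (hA : A.Nonempty) (hA' : BddAbove A)
    (hB : B.Nonempty) (hB' : BddAbove B) {a b : ℝ} (ha : 0 ≤ a) (hb : 0 ≤ b) :
    sSup (Set.image2 (fun x y => (a * x + b * y) / (a + b)) A B)
      = (a * sSup A + b * sSup B) / (a + b) := by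
  have hset : Set.image2 (fun x y => (a * x + b * y) / (a + b)) A B
      = (a + b)⁻¹ • (a • A + b • B) := by
    rw [← Set.image2_add, ← Set.image_smul, ← Set.image_smul, ← Set.image_smul,
      Set.image_image2, Set.image2_image_left, Set.image2_image_right]
    simp only [smul_eq_mul, inv_mul_eq_div]
  rw [hset, Real.sSup_smul_of_nonneg (by positivity),
    csSup_add hA.smul_set (hA'.smul_of_nonneg ha) hB.smul_set (hB'.smul_of_nonneg hb),
    Real.sSup_smul_of_nonneg ha, Real.sSup_smul_of_nonneg hb]
  simp only [smul_eq_mul, inv_mul_eq_div]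

namespace Matrix

variable {ι : Type*} [Fintype ι] [DecidableEq ι]

/-- `Pᴴ σ P` with `P = 1 - |v⟩⟨v|` is positive, and its trace is `tr σ - ⟨v|σ|v⟩`. -/
lemma PosSemidef.dotProduct_mulVec_le_trace {σ : Matrix ι ι ℂ} (hσ : σ.PosSemidef) {v : ι → ℂ}
    (hv : star v ⬝ᵥ v = 1) : star v ⬝ᵥ σ *ᵥ v ≤ σ.trace := by
  set P : Matrix ι ι ℂ := 1 - vecMulVec v (star v)
  have hP : Pᴴ = P := by simp [P, conjTranspose_vecMulVec]
  have hPP : P * P = P := by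
    simp only [P, sub_mul, mul_sub, one_mul, mul_one, vecMulVec_mul_vecMulVec, hv, one_smul]
    abel
  have h := (hσ.conjTranspose_mul_mul_same P).trace_nonneg
  rw [trace_mul_cycle, hP, hPP, trace_mul_comm, mul_sub, mul_one, trace_sub, mul_vecMulVec,
    trace_vecMulVec, dotProduct_comm] at h
  exact sub_nonneg.mp h

lemma PosSemidef.exists_trace_eq_one_sub [Nonempty ι] {ρ : Matrix ι ι ℂ} (hρ : ρ.PosSemidef)
    (htr : ρ.trace ≤ 1) :
    ∃ τ : Matrix ι ι ℂ, τ.PosSemidef ∧ τ.trace = 1 ∧ (τ - ρ).PosSemidef := by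
  set c : ℂ := (1 - ρ.trace) / Fintype.card ι
  have hc : 0 ≤ c := div_nonneg (sub_nonneg.mpr htr) (Nat.cast_nonneg _)
  have hcard : (Fintype.card ι : ℂ) ≠ 0 := Nat.cast_ne_zero.mpr Fintype.card_ne_zero
  refine ⟨ρ + c • 1, hρ.add (PosSemidef.one.smul hc), ?_, by simpa using PosSemidef.one.smul hc⟩
  rw [trace_add, trace_smul, trace_one, smul_eq_mul, div_mul_cancel₀ _ hcard]
  ring

end Matrix

section Strategies

variable {ι κ : Type*} [Fintype ι] [Fintype κ]

def IsPOVM [DecidableEq ι] (M : κ → Matrix ι ι ℂ) : Prop :=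
  (∀ k, (M k).PosSemidef) ∧ ∑ k, M k = 1

def IsDensityMatrix (ρ : Matrix ι ι ℂ) : Prop :=
  ρ.PosSemidef ∧ ρ.trace = 1

lemma IsPOVM.sum_dotProduct_mulVec [DecidableEq ι] {M : κ → Matrix ι ι ℂ} (hM : IsPOVM M)
    (v : ι → ℂ) :
    ∑ k, star v ⬝ᵥ M k *ᵥ v = star v ⬝ᵥ v := by
  rw [← dotProduct_sum, ← sum_mulVec, hM.2, one_mulVec]

lemma IsPOVM.conjTranspose_mul_mul [DecidableEq ι] {ι' : Type*} [Fintype ι'] [DecidableEq ι']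
    {M : κ → Matrix ι ι ℂ} (hM : IsPOVM M) {V : Matrix ι ι' ℂ} (hV : Vᴴ * V = 1) :
    IsPOVM fun k => Vᴴ * M k * V :=
  ⟨fun k => (hM.1 k).conjTranspose_mul_mul_same V, by
    change ∑ k, Vᴴ * M k * V = 1
    rw [← Matrix.sum_mul, ← Matrix.mul_sum, hM.2, Matrix.mul_one, hV]⟩

lemma IsDensityMatrix.mul_mul_conjTranspose {ι' : Type*} [Fintype ι'] [DecidableEq ι']
    {ρ : Matrix ι' ι' ℂ} (hρ : IsDensityMatrix ρ) {V : Matrix ι ι' ℂ} (hV : Vᴴ * V = 1) :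
    IsDensityMatrix (V * ρ * Vᴴ) :=
  ⟨hρ.1.mul_mul_conjTranspose_same V, by rw [trace_mul_cycle, hV, Matrix.one_mul, hρ.2]⟩

end Strategies

section Fidelity

variable {n : ℕ} {S κ : Type*} [Fintype S] [Fintype κ]

/-- `|S|` times the average fidelity of the strategy `(M, σ)` on the ensemble `ψ`. -/
noncomputable def fidelitySum (ψ : S → Fin n → ℂ) (M σ : κ → Matrix (Fin n) (Fin n) ℂ) : ℝ :=
  ∑ k, ∑ s, (qinner (ψ s) (M k *ᵥ ψ s)).re * (qinner (ψ s) (σ k *ᵥ ψ s)).re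

lemma card_mul_fidelitySum_div_card (ψ : S → Fin n → ℂ) (M σ : κ → Matrix (Fin n) (Fin n) ℂ) :
    Fintype.card S * (fidelitySum ψ M σ / Fintype.card S) = fidelitySum ψ M σ := by
  rcases isEmpty_or_nonempty S with hS | hS
  · simp [fidelitySum]
  · exact mul_div_cancel₀ _ (Nat.cast_ne_zero.mpr Fintype.card_ne_zero)

lemma re_qinner_mulVec_le_one {ρ : Matrix (Fin n) (Fin n) ℂ} (hρ : IsDensityMatrix ρ)
    {v : Fin n → ℂ} (hv : qinner v v = 1) : (qinner v (ρ *ᵥ v)).re ≤ 1 := by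
  simpa [qinner, hρ.2] using (Complex.le_def.mp (hρ.1.dotProduct_mulVec_le_trace hv)).1

lemma fidelitySum_le_card {ψ : S → Fin n → ℂ} (hψ : ∀ s, qinner (ψ s) (ψ s) = 1)
    {M σ : κ → Matrix (Fin n) (Fin n) ℂ} (hM : IsPOVM M) (hσ : ∀ k, IsDensityMatrix (σ k)) :
    fidelitySum ψ M σ ≤ Fintype.card S := by
  have hPOVM (s : S) : ∑ k, (qinner (ψ s) (M k *ᵥ ψ s)).re = 1 := by
    simp only [← Complex.re_sum, qinner]
    rw [hM.sum_dotProduct_mulVec, ← qinner, hψ s, Complex.one_re]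
  calc fidelitySum ψ M σ ≤ ∑ k, ∑ s, (qinner (ψ s) (M k *ᵥ ψ s)).re :=
        Finset.sum_le_sum fun k _ => Finset.sum_le_sum fun s _ =>
          mul_le_of_le_one_right ((hM.1 k).re_dotProduct_nonneg _)
            (re_qinner_mulVec_le_one (hσ k) (hψ s))
    _ = Fintype.card S := by simp [Finset.sum_comm (γ := κ), hPOVM]

lemma fidelitySum_mono {ψ : S → Fin n → ℂ} {M σ τ : κ → Matrix (Fin n) (Fin n) ℂ}
    (hM : ∀ k, (M k).PosSemidef) (hστ : ∀ k, (τ k - σ k).PosSemidef) :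
    fidelitySum ψ M σ ≤ fidelitySum ψ M τ := by
  refine Finset.sum_le_sum fun k _ => Finset.sum_le_sum fun s _ =>
    mul_le_mul_of_nonneg_left ?_ ((hM k).re_dotProduct_nonneg _)
  have := (hστ k).re_dotProduct_nonneg (ψ s)
  rw [sub_mulVec, dotProduct_sub] at this
  simpa [qinner] using this

lemma fidelitySum_sumElim {S' : Type*} [Fintype S'] (φ : S → Fin n → ℂ) (φ' : S' → Fin n → ℂ)
    (M σ : κ → Matrix (Fin n) (Fin n) ℂ) :
    fidelitySum (Sum.elim φ φ') M σ = fidelitySum φ M σ + fidelitySum φ' M σ := by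
  simp only [fidelitySum, Fintype.sum_sum_type, Sum.elim_inl, Sum.elim_inr,
    Finset.sum_add_distrib]

lemma fidelitySum_append {m m' : ℕ} (ψ : S → Fin n → ℂ) (M σ : Fin m → Matrix (Fin n) (Fin n) ℂ)
    (M' σ' : Fin m' → Matrix (Fin n) (Fin n) ℂ) :
    fidelitySum ψ (Fin.append M M') (Fin.append σ σ')
      = fidelitySum ψ M σ + fidelitySum ψ M' σ' := by
  simp only [fidelitySum, Fin.sum_univ_add, Fin.append_left, Fin.append_right]

lemma fidelitySum_mulVec {d : ℕ} (V : Matrix (Fin n) (Fin d) ℂ) (ψ : S → Fin d → ℂ)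
    (M σ : κ → Matrix (Fin n) (Fin n) ℂ) :
    fidelitySum (fun s => V *ᵥ ψ s) M σ
      = fidelitySum ψ (fun k => Vᴴ * M k * V) (fun k => Vᴴ * σ k * V) := by
  have h (A : Matrix (Fin n) (Fin n) ℂ) (x : Fin d → ℂ) :
      qinner (V *ᵥ x) (A *ᵥ V *ᵥ x) = qinner x ((Vᴴ * A * V) *ᵥ x) := by
    rw [qinner, qinner, star_mulVec, ← dotProduct_mulVec, mulVec_mulVec, mulVec_mulVec,
      Matrix.mul_assoc]
  simp only [fidelitySum, h]

lemma fidelitySum_mulVec_conj_self {d : ℕ} {V : Matrix (Fin n) (Fin d) ℂ} (hV : Vᴴ * V = 1)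
    (ψ : S → Fin d → ℂ) (M σ : κ → Matrix (Fin d) (Fin d) ℂ) :
    fidelitySum (fun s => V *ᵥ ψ s) (fun k => V * M k * Vᴴ) (fun k => V * σ k * Vᴴ)
      = fidelitySum ψ M σ := by
  have h (A : Matrix (Fin d) (Fin d) ℂ) : Vᴴ * (V * A * Vᴴ) * V = A := by
    rw [show Vᴴ * (V * A * Vᴴ) * V = Vᴴ * V * A * (Vᴴ * V) by simp only [Matrix.mul_assoc], hV,
      Matrix.one_mul, Matrix.mul_one]
  simp only [fidelitySum_mulVec, h]

lemma fidelitySum_mulVec_conj_of_orthogonal {d d' : ℕ} {V : Matrix (Fin n) (Fin d) ℂ}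
    {W : Matrix (Fin n) (Fin d') ℂ} (hVW : Vᴴ * W = 0)
    (ψ : S → Fin d → ℂ) (M : κ → Matrix (Fin d') (Fin d') ℂ) (σ : κ → Matrix (Fin n) (Fin n) ℂ) :
    fidelitySum (fun s => V *ᵥ ψ s) (fun k => W * M k * Wᴴ) σ = 0 := by
  have h (A : Matrix (Fin d') (Fin d') ℂ) : Vᴴ * (W * A * Wᴴ) * V = 0 := by
    rw [show Vᴴ * (W * A * Wᴴ) * V = Vᴴ * W * A * (Vᴴ * W)ᴴ by
      simp only [conjTranspose_mul, conjTranspose_conjTranspose, Matrix.mul_assoc], hVW,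
      Matrix.zero_mul, Matrix.zero_mul]
  rw [fidelitySum_mulVec]
  simp [h, fidelitySum, qinner]

end Fidelity

section FidSet

variable {n : ℕ} {S : Type} [Fintype S]

lemma mem_fidSet_iff {ψ : S → Fin n → ℂ} {x : ℝ} :
    x ∈ fidSet ψ ↔ ∃ (m : ℕ) (M σ : Fin m → Matrix (Fin n) (Fin n) ℂ),
      IsPOVM M ∧ (∀ k, IsDensityMatrix (σ k)) ∧ x = fidelitySum ψ M σ / Fintype.card S := by
  simp only [fidSet, Set.mem_ofPred_eq, IsPOVM, IsDensityMatrix, fidelitySum, and_assoc,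
    one_div_mul_eq_div]

lemma fidSet_bddAbove {ψ : S → Fin n → ℂ} (hψ : ∀ s, qinner (ψ s) (ψ s) = 1) :
    BddAbove (fidSet ψ) := by
  refine ⟨1, fun x hx => ?_⟩
  obtain ⟨m, M, σ, hM, hσ, rfl⟩ := mem_fidSet_iff.mp hx
  exact div_le_one_of_le₀ (fidelitySum_le_card hψ hM hσ) (Nat.cast_nonneg _)

lemma fidSet_nonempty (hn : 0 < n) (ψ : S → Fin n → ℂ) : (fidSet ψ).Nonempty := by
  have : Nonempty (Fin n) := Fin.pos_iff_nonempty.mp hn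
  obtain ⟨τ, hτ, htr, -⟩ := PosSemidef.zero.exists_trace_eq_one_sub (ι := Fin n) (by simp)
  exact ⟨_, mem_fidSet_iff.mpr ⟨1, fun _ => 1, fun _ => τ,
    ⟨fun _ => PosSemidef.one, by simp⟩, fun _ => ⟨hτ, htr⟩, rfl⟩⟩

/-- The witness is the compressed POVM `Vᴴ M V` together with the compressed density matrices
`Vᴴ σ V`, padded up to trace one. -/
lemma exists_mem_fidSet_ge_fidelitySum_mulVec {d m : ℕ} (hd : 0 < d)
    {V : Matrix (Fin n) (Fin d) ℂ} (hV : Vᴴ * V = 1) {M σ : Fin m → Matrix (Fin n) (Fin n) ℂ}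
    (hM : IsPOVM M) (hσ : ∀ k, (σ k).PosSemidef) (htr : ∀ k, (Vᴴ * σ k * V).trace ≤ 1)
    (ψ : S → Fin d → ℂ) :
    ∃ x ∈ fidSet ψ, fidelitySum (fun s => V *ᵥ ψ s) M σ ≤ Fintype.card S * x := by
  have : Nonempty (Fin d) := Fin.pos_iff_nonempty.mp hd
  choose τ hτ hτtr hστ using fun k =>
    ((hσ k).conjTranspose_mul_mul_same V).exists_trace_eq_one_sub (htr k)
  refine ⟨_, mem_fidSet_iff.mpr ⟨m, _, τ, hM.conjTranspose_mul_mul hV,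
    fun k => ⟨hτ k, hτtr k⟩, rfl⟩, ?_⟩
  rw [card_mul_fidelitySum_div_card, fidelitySum_mulVec]
  exact fidelitySum_mono (fun k => (hM.1 k).conjTranspose_mul_mul_same V) hστ

end FidSet

structure IsOrthogonalDecomposition {n d₁ d₂ : ℕ} (V₁ : Matrix (Fin n) (Fin d₁) ℂ)
    (V₂ : Matrix (Fin n) (Fin d₂) ℂ) : Prop where
  isometry_left : V₁ᴴ * V₁ = 1
  isometry_right : V₂ᴴ * V₂ = 1
  orthogonal : V₁ᴴ * V₂ = 0
  complete : V₁ * V₁ᴴ + V₂ * V₂ᴴ = 1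

namespace IsOrthogonalDecomposition

variable {n d₁ d₂ : ℕ} {V₁ : Matrix (Fin n) (Fin d₁) ℂ} {V₂ : Matrix (Fin n) (Fin d₂) ℂ}

lemma orthogonal_symm (hV : IsOrthogonalDecomposition V₁ V₂) : V₂ᴴ * V₁ = 0 := by
  simpa using congrArg conjTranspose hV.orthogonal

lemma symm (hV : IsOrthogonalDecomposition V₁ V₂) : IsOrthogonalDecomposition V₂ V₁ :=
  ⟨hV.isometry_right, hV.isometry_left, hV.orthogonal_symm, by rw [add_comm, hV.complete]⟩

lemma trace_conj_add_trace_conj (hV : IsOrthogonalDecomposition V₁ V₂)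
    (σ : Matrix (Fin n) (Fin n) ℂ) :
    (V₁ᴴ * σ * V₁).trace + (V₂ᴴ * σ * V₂).trace = σ.trace := by
  rw [trace_mul_cycle, trace_mul_cycle (A := V₂ᴴ), ← trace_add, ← Matrix.add_mul, hV.complete,
    Matrix.one_mul]

lemma trace_conj_le_one (hV : IsOrthogonalDecomposition V₁ V₂) {σ : Matrix (Fin n) (Fin n) ℂ}
    (hσ : IsDensityMatrix σ) : (V₁ᴴ * σ * V₁).trace ≤ 1 := by
  have h := hV.trace_conj_add_trace_conj σ
  have h₂ := (hσ.1.conjTranspose_mul_mul_same V₂).trace_nonneg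
  rw [hσ.2] at h
  exact le_of_add_le_of_nonneg_left h.le h₂

lemma isPOVM_append (hV : IsOrthogonalDecomposition V₁ V₂) {m₁ m₂ : ℕ}
    {M₁ : Fin m₁ → Matrix (Fin d₁) (Fin d₁) ℂ} {M₂ : Fin m₂ → Matrix (Fin d₂) (Fin d₂) ℂ}
    (hM₁ : IsPOVM M₁) (hM₂ : IsPOVM M₂) :
    IsPOVM (Fin.append (fun k => V₁ * M₁ k * V₁ᴴ) (fun k => V₂ * M₂ k * V₂ᴴ)) := by
  constructor
  · intro k
    induction k using Fin.addCases with
    | left k => simpa using (hM₁.1 k).mul_mul_conjTranspose_same V₁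
    | right k => simpa using (hM₂.1 k).mul_mul_conjTranspose_same V₂
  · rw [Fin.sum_univ_add]
    simp only [Fin.append_left, Fin.append_right]
    rw [← Matrix.sum_mul, ← Matrix.mul_sum, ← Matrix.sum_mul, ← Matrix.mul_sum, hM₁.2, hM₂.2,
      Matrix.mul_one, Matrix.mul_one, hV.complete]

lemma fidelitySum_pushforward (hV : IsOrthogonalDecomposition V₁ V₂) {S₁ S₂ : Type*}
    [Fintype S₁] [Fintype S₂] (ψ₁ : S₁ → Fin d₁ → ℂ) (ψ₂ : S₂ → Fin d₂ → ℂ) {m₁ m₂ : ℕ}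
    (M₁ σ₁ : Fin m₁ → Matrix (Fin d₁) (Fin d₁) ℂ) (M₂ σ₂ : Fin m₂ → Matrix (Fin d₂) (Fin d₂) ℂ) :
    fidelitySum (Sum.elim (fun s => V₁ *ᵥ ψ₁ s) (fun s => V₂ *ᵥ ψ₂ s))
        (Fin.append (fun k => V₁ * M₁ k * V₁ᴴ) (fun k => V₂ * M₂ k * V₂ᴴ))
        (Fin.append (fun k => V₁ * σ₁ k * V₁ᴴ) (fun k => V₂ * σ₂ k * V₂ᴴ))
      = fidelitySum ψ₁ M₁ σ₁ + fidelitySum ψ₂ M₂ σ₂ := by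
  rw [fidelitySum_sumElim, fidelitySum_append, fidelitySum_append,
    fidelitySum_mulVec_conj_self hV.isometry_left,
    fidelitySum_mulVec_conj_of_orthogonal hV.orthogonal,
    fidelitySum_mulVec_conj_of_orthogonal hV.orthogonal_symm,
    fidelitySum_mulVec_conj_self hV.isometry_right, add_zero, zero_add]

variable {S₁ S₂ : Type} [Fintype S₁] [Fintype S₂] {ψ₁ : S₁ → Fin d₁ → ℂ} {ψ₂ : S₂ → Fin d₂ → ℂ}

lemma weightedMean_mem_fidSet (hV : IsOrthogonalDecomposition V₁ V₂) {x₁ x₂ : ℝ}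
    (hx₁ : x₁ ∈ fidSet ψ₁) (hx₂ : x₂ ∈ fidSet ψ₂) :
    (Fintype.card S₁ * x₁ + Fintype.card S₂ * x₂) / (Fintype.card S₁ + Fintype.card S₂)
      ∈ fidSet (Sum.elim (fun s => V₁ *ᵥ ψ₁ s) (fun s => V₂ *ᵥ ψ₂ s)) := by
  obtain ⟨m₁, M₁, σ₁, hM₁, hσ₁, rfl⟩ := mem_fidSet_iff.mp hx₁
  obtain ⟨m₂, M₂, σ₂, hM₂, hσ₂, rfl⟩ := mem_fidSet_iff.mp hx₂
  refine mem_fidSet_iff.mpr ⟨m₁ + m₂, _,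
    Fin.append (fun k => V₁ * σ₁ k * V₁ᴴ) (fun k => V₂ * σ₂ k * V₂ᴴ),
    hV.isPOVM_append hM₁ hM₂, fun k => ?_, ?_⟩
  · induction k using Fin.addCases with
    | left k => simpa using (hσ₁ k).mul_mul_conjTranspose hV.isometry_left
    | right k => simpa using (hσ₂ k).mul_mul_conjTranspose hV.isometry_right
  · rw [hV.fidelitySum_pushforward, card_mul_fidelitySum_div_card,
      card_mul_fidelitySum_div_card, Fintype.card_sum, Nat.cast_add]

lemma exists_le_weightedMean (hV : IsOrthogonalDecomposition V₁ V₂) (hd₁ : 0 < d₁)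
    (hd₂ : 0 < d₂) {x : ℝ}
    (hx : x ∈ fidSet (Sum.elim (fun s => V₁ *ᵥ ψ₁ s) (fun s => V₂ *ᵥ ψ₂ s))) :
    ∃ x₁ ∈ fidSet ψ₁, ∃ x₂ ∈ fidSet ψ₂,
      x ≤ (Fintype.card S₁ * x₁ + Fintype.card S₂ * x₂) / (Fintype.card S₁ + Fintype.card S₂) := by
  obtain ⟨m, M, σ, hM, hσ, rfl⟩ := mem_fidSet_iff.mp hx
  obtain ⟨x₁, hx₁, h₁⟩ := exists_mem_fidSet_ge_fidelitySum_mulVec hd₁ hV.isometry_left hM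
    (fun k => (hσ k).1) (fun k => hV.trace_conj_le_one (hσ k)) ψ₁
  obtain ⟨x₂, hx₂, h₂⟩ := exists_mem_fidSet_ge_fidelitySum_mulVec hd₂ hV.isometry_right hM
    (fun k => (hσ k).1) (fun k => hV.symm.trace_conj_le_one (hσ k)) ψ₂
  refine ⟨x₁, hx₁, x₂, hx₂, ?_⟩
  rw [fidelitySum_sumElim, Fintype.card_sum, Nat.cast_add]
  gcongr

theorem sSup_fidSet_sumElim (hV : IsOrthogonalDecomposition V₁ V₂) (hd₁ : 0 < d₁)
    (hd₂ : 0 < d₂) (hψ₁ : ∀ s, qinner (ψ₁ s) (ψ₁ s) = 1) (hψ₂ : ∀ s, qinner (ψ₂ s) (ψ₂ s) = 1) :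
    sSup (fidSet (Sum.elim (fun s => V₁ *ᵥ ψ₁ s) (fun s => V₂ *ᵥ ψ₂ s)))
      = (Fintype.card S₁ * sSup (fidSet ψ₁) + Fintype.card S₂ * sSup (fidSet ψ₂))
          / (Fintype.card S₁ + Fintype.card S₂) := by
  rw [← csSup_image2_weightedMean (fidSet_nonempty hd₁ ψ₁) (fidSet_bddAbove hψ₁)
    (fidSet_nonempty hd₂ ψ₂) (fidSet_bddAbove hψ₂) (Nat.cast_nonneg _) (Nat.cast_nonneg _)]
  apply csSup_eq_csSup_of_forall_exists_le
  · intro x hx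
    obtain ⟨x₁, hx₁, x₂, hx₂, hle⟩ := hV.exists_le_weightedMean hd₁ hd₂ hx
    exact ⟨_, Set.mem_image2_of_mem hx₁ hx₂, hle⟩
  · rintro _ ⟨x₁, hx₁, x₂, hx₂, rfl⟩
    exact ⟨_, hV.weightedMean_mem_fidSet hx₁ hx₂, le_rfl⟩

end IsOrthogonalDecomposition

lemma Fin.castAdd_ne_natAdd {m n : ℕ} (i : Fin m) (j : Fin n) :
    Fin.castAdd n i ≠ Fin.natAdd m j := by
  simp only [ne_eq, Fin.ext_iff, Fin.val_castAdd, Fin.val_natAdd]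
  omega

noncomputable def inclLeft (d₁ d₂ : ℕ) : Matrix (Fin (d₁ + d₂)) (Fin d₁) ℂ :=
  (1 : Matrix _ _ ℂ).submatrix id (Fin.castAdd d₂)

noncomputable def inclRight (d₁ d₂ : ℕ) : Matrix (Fin (d₁ + d₂)) (Fin d₂) ℂ :=
  (1 : Matrix _ _ ℂ).submatrix id (Fin.natAdd d₁)

lemma inclLeft_mulVec {d₁ d₂ : ℕ} (x : Fin d₁ → ℂ) :
    inclLeft d₁ d₂ *ᵥ x = Fin.append x 0 := by
  ext i
  induction i using Fin.addCases <;>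
    simp [inclLeft, mulVec, dotProduct, one_apply, (Fin.castAdd_ne_natAdd _ _).symm]

lemma inclRight_mulVec {d₁ d₂ : ℕ} (y : Fin d₂ → ℂ) :
    inclRight d₁ d₂ *ᵥ y = Fin.append 0 y := by
  ext i
  induction i using Fin.addCases <;>
    simp [inclRight, mulVec, dotProduct, one_apply, Fin.castAdd_ne_natAdd]

lemma isOrthogonalDecomposition_inclLeft_inclRight (d₁ d₂ : ℕ) :
    IsOrthogonalDecomposition (inclLeft d₁ d₂) (inclRight d₁ d₂) where
  isometry_left := by ext i j; simp [inclLeft, mul_apply, one_apply]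
  isometry_right := by ext i j; simp [inclRight, mul_apply, one_apply]
  orthogonal := by
    ext i j; simp [inclLeft, inclRight, mul_apply, one_apply, Fin.castAdd_ne_natAdd]
  complete := by
    ext i j
    induction i using Fin.addCases <;> induction j using Fin.addCases <;>
      simp [inclLeft, inclRight, mul_apply, one_apply, Fin.castAdd_ne_natAdd,
        (Fin.castAdd_ne_natAdd _ _).symm]

theorem maxFidelity_additive_general {d₁ d₂ N₁ N₂ : ℕ}
    (hd₁ : 0 < d₁) (hd₂ : 0 < d₂)
    (ψ₁ : Fin (N₁ * d₁) → Fin d₁ → ℂ) (ψ₂ : Fin (N₂ * d₂) → Fin d₂ → ℂ)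
    (hψ₁ : ∀ s, qinner (ψ₁ s) (ψ₁ s) = 1) (hψ₂ : ∀ s, qinner (ψ₂ s) (ψ₂ s) = 1) :
    sSup (fidSet (Sum.elim (fun s => Fin.append (ψ₁ s) (0 : Fin d₂ → ℂ))
        (fun s => Fin.append (0 : Fin d₁ → ℂ) (ψ₂ s))))
      = ((N₁ * d₁ : ℝ) * sSup (fidSet ψ₁) + (N₂ * d₂ : ℝ) * sSup (fidSet ψ₂))
          / ((N₁ * d₁ : ℝ) + (N₂ * d₂ : ℝ)) := by
  have h := (isOrthogonalDecomposition_inclLeft_inclRight d₁ d₂).sSup_fidSet_sumElim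
    hd₁ hd₂ hψ₁ hψ₂
  simpa only [inclLeft_mulVec, inclRight_mulVec, Fintype.card_fin, Nat.cast_mul] using h

theorem maxFidelity_additive {d₁ d₂ N₁ N₂ : ℕ}
    (hd₁ : 0 < d₁) (hd₂ : 0 < d₂) (hN₁ : 0 < N₁) (hN₂ : 0 < N₂)
    (ψ₁ : Fin (N₁ * d₁) → Fin d₁ → ℂ) (ψ₂ : Fin (N₂ * d₂) → Fin d₂ → ℂ)
    (hψ₁ : ∀ s, qinner (ψ₁ s) (ψ₁ s) = 1) (hψ₂ : ∀ s, qinner (ψ₂ s) (ψ₂ s) = 1) :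
    sSup (fidSet (Sum.elim (fun s => Fin.append (ψ₁ s) (0 : Fin d₂ → ℂ))
        (fun s => Fin.append (0 : Fin d₁ → ℂ) (ψ₂ s))))
      = ((N₁ * d₁ : ℝ) * sSup (fidSet ψ₁) + (N₂ * d₂ : ℝ) * sSup (fidSet ψ₂))
          / ((N₁ * d₁ : ℝ) + (N₂ * d₂ : ℝ)) :=
  maxFidelity_additive_general hd₁ hd₂ ψ₁ ψ₂ hψ₁ hψ₂
end

section
/- For all real numbers α and δ, cos²α + cos²(α−δ) + 2 cos α · cos(α−δ) · cos δ ≤ (1 + |cos δ|)², and when cos δ ≥ 0 equality holds at α = δ/2. -/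
lemma trig_key (α δ : ℝ) :
    Real.cos α ^ 2 + Real.cos (α - δ) ^ 2
      + 2 * Real.cos α * Real.cos (α - δ) * Real.cos δ
    = 1 + Real.cos δ ^ 2 + 2 * Real.cos δ * Real.cos (2 * α - δ) := by
  have h1 : (2 : ℝ) * α - δ = α + (α - δ) := by ring
  rw [h1, Real.cos_add, Real.cos_sub, Real.sin_sub]
  nlinarith [Real.sin_sq_add_cos_sq α, Real.sin_sq_add_cos_sq δ]

theorem trig_fidelity_bound :
    (∀ α δ : ℝ, Real.cos α ^ 2 + Real.cos (α - δ) ^ 2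
        + 2 * Real.cos α * Real.cos (α - δ) * Real.cos δ
      ≤ (1 + |Real.cos δ|) ^ 2) ∧
    ∀ δ : ℝ, 0 ≤ Real.cos δ →
      Real.cos (δ / 2) ^ 2 + Real.cos (δ / 2 - δ) ^ 2
          + 2 * Real.cos (δ / 2) * Real.cos (δ / 2 - δ) * Real.cos δ
        = (1 + |Real.cos δ|) ^ 2 := by
  constructor
  · intro α δ
    rw [trig_key]
    have h1 := Real.neg_one_le_cos (2 * α - δ)
    have h2 := Real.cos_le_one (2 * α - δ)
    have h3 : Real.cos δ ≤ |Real.cos δ| := le_abs_self _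
    have h4 : -Real.cos δ ≤ |Real.cos δ| := neg_le_abs _
    have h5 : |Real.cos δ| ^ 2 = Real.cos δ ^ 2 := sq_abs _
    nlinarith
  · intro δ hδ
    rw [trig_key]
    have : (2 : ℝ) * (δ / 2) - δ = 0 := by ring
    rw [this, Real.cos_zero, abs_of_nonneg hδ]
    ring
end
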